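/- Let k ≥ 1 and t ≥ 2 be integers, let n ≥ max{12tk + 2k, 4tk^2}, and set N = 2n + t − 2. Suppose the edges of the complete graph K_N are colored red and blue so that there is no red copy of the star K_{1,n−1} and no blue copy of tF_k. Let A be the vertex set of a blue copy of (t−1)F_k and S = V(K_N) \ A. Let S_1, S_2 be disjoint subsets of S such that every vertex of S_1 has at least n − 4kt + 5 blue neighbors in S_2 and every vertex of S_2 has at least n − 4kt + 5 blue neighbors in S_1. Then for each of the t − 1 vertex-disjoint blue copies of F_k spanning A, at most one vertex of that copy has at least 2k blue neighbors in S_1 and at least 2k blue neighbors in S_2. -/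

import Mathlib

/-!
Suppose two distinct vertices `a`, `b` of the `j`-th fan of `A` both have `2k` blue neighbours in
`S₁` and in `S₂`. Then blue fans `F_k` centred at `a` and at `b`, vertex-disjoint and with all their
leaves in `S₁ ∪ S₂ ⊆ S`, can be grown greedily one triangle `w p q` (`p ∈ S₁`, `q ∈ S₂`) at a time;
replacing the `j`-th fan by these two yields a blue `tF_k`. A greedy step never gets stuck: red
degrees are at most `n - 2`, so the centre `w` is blue to all but at most `n - 2` vertices of
`S₁ ∪ S₂`, hence on one side, say `S₁`, it misses at most `d - 2k` vertices (`d = n - 4kt + 5`).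
An unused blue neighbour `q ∈ S₂` of `w` then has among its `d` blue neighbours in `S₁` at least
`2k` blue neighbours of `w`, more than have been used so far.
-/

open SimpleGraph

/-- `host.ContainsCopy G` means that `host` contains a (not necessarily induced) subgraph
isomorphic to `G`. -/
def SimpleGraph.ContainsCopy {β α : Type*} (host : SimpleGraph β) (G : SimpleGraph α) : Prop :=
  ∃ f : α → β, Function.Injective f ∧ ∀ ⦃a b : α⦄, G.Adj a b → host.Adj (f a) (f b)

/-- `ramseyProp G H N` means: for every red-blue coloring of the edges of the complete graph
on `N` vertices (given by its red graph `red`, the blue graph being the complement `redᶜ`),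
there is a red copy of `G` or a blue copy of `H`. -/
def ramseyProp {α β : Type*} (G : SimpleGraph α) (H : SimpleGraph β) (N : ℕ) : Prop :=
  ∀ red : SimpleGraph (Fin N), red.ContainsCopy G ∨ (redᶜ).ContainsCopy H

/-- The Ramsey number `r(G, H)`: the least `N` with the Ramsey property. -/
noncomputable def ramseyNumber {α β : Type*} (G : SimpleGraph α) (H : SimpleGraph β) : ℕ :=
  sInf {N | ramseyProp G H N}

/-- The fan `F_k = K_1 + k·K_2`: `k` triangles sharing exactly one common vertex (`none`). -/
def fan (k : ℕ) : SimpleGraph (Option (Fin k × Fin 2)) :=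
  SimpleGraph.fromRel (fun x y => x = none ∨ ∃ i a b, x = some (i, a) ∧ y = some (i, b))

/-- `copies t G` is the disjoint union of `t` copies of `G`. -/
def copies {α : Type*} (t : ℕ) (G : SimpleGraph α) : SimpleGraph (Fin t × α) where
  Adj x y := x.1 = y.1 ∧ G.Adj x.2 y.2
  symm := ⟨fun _ _ h => ⟨h.1.symm, h.2.symm⟩⟩
  loopless := ⟨fun x h => G.loopless.irrefl x.2 h.2⟩

open Function Set

lemma Pairwise.disjoint_update {ι β : Type*} [DecidableEq ι] [PartialOrder β] [OrderBot β]
    {F : ι → β} (hF : Pairwise (Disjoint on F)) {j : ι} {T : β} (hT : ∀ i ≠ j, Disjoint T (F i)) :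
    Pairwise (Disjoint on update F j T) := by
  intro i i' hne
  by_cases hi : i = j
  · subst hi
    simpa [onFun, update_of_ne hne.symm] using hT i' hne.symm
  by_cases hi' : i' = j
  · subst hi'
    simpa [onFun, update_of_ne hne] using (hT i hne).symm
  simpa [onFun, update_of_ne hi, update_of_ne hi'] using hF hne

lemma pairwise_disjoint_option_elim {ι β : Type*} [PartialOrder β] [OrderBot β] {F : ι → β}
    (hF : Pairwise (Disjoint on F)) {T : β} (hT : ∀ i, Disjoint T (F i)) :
    Pairwise (Disjoint on fun o : Option ι => o.elim T F) := by
  rintro (_ | i) (_ | i') hne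
  exacts [absurd rfl hne, hT i', (hT i).symm, hF fun h => hne (congrArg some h)]

lemma Set.ncard_inter_add_ncard_inter_of_disjoint {V : Type*} [Finite V] (T : Set V)
    {S₁ S₂ : Set V} (hS : Disjoint S₁ S₂) :
    (T ∩ S₁).ncard + (T ∩ S₂).ncard = (T ∩ (S₁ ∪ S₂)).ncard := by
  rw [inter_union_distrib_left,
    ncard_union_eq (hS.mono inter_subset_right inter_subset_right)]

lemma exists_injective_pairs {V : Type*} {P : V → V → Prop} {r : ℕ}
    (hP : ∀ U₁ U₂ : Set V, U₁.ncard < r → U₂.ncard < r → ∃ p ∉ U₁, ∃ q ∉ U₂, P p q) :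
    ∀ (m : ℕ) {U₁ U₂ : Set V}, U₁.ncard + m ≤ r → U₂.ncard + m ≤ r →
      ∃ p q : Fin m → V, Injective p ∧ Injective q ∧ Disjoint (range p) U₁ ∧
        Disjoint (range q) U₂ ∧ ∀ i, P (p i) (q i)
  | 0, _, _, _, _ => ⟨Fin.elim0, Fin.elim0, injective_of_subsingleton _,
      injective_of_subsingleton _, by simp, by simp, fun i => i.elim0⟩
  | m + 1, U₁, U₂, h₁, h₂ => by
    obtain ⟨p₀, hp₀, q₀, hq₀, hpq₀⟩ := hP U₁ U₂ (by omega) (by omega)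
    obtain ⟨p, q, hp, hq, hpU, hqU, hpq⟩ :=
      exists_injective_pairs hP m (U₁ := insert p₀ U₁) (U₂ := insert q₀ U₂)
        (by have := ncard_insert_le p₀ U₁; omega) (by have := ncard_insert_le q₀ U₂; omega)
    rw [disjoint_insert_right] at hpU hqU
    refine ⟨Fin.cons p₀ p, Fin.cons q₀ q, Fin.cons_injective_iff.2 ⟨hpU.1, hp⟩,
      Fin.cons_injective_iff.2 ⟨hqU.1, hq⟩, ?_, ?_, Fin.cases hpq₀ hpq⟩
    · rw [Fin.range_cons, disjoint_insert_left]
      exact ⟨hp₀, hpU.2⟩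
    · rw [Fin.range_cons, disjoint_insert_left]
      exact ⟨hq₀, hqU.2⟩

namespace SimpleGraph

variable {V α : Type*}

lemma ncard_neighborSet_lt_of_not_containsCopy_star [Finite V] {G : SimpleGraph V} {m : ℕ}
    (h : ¬ G.ContainsCopy (completeBipartiteGraph (Fin 1) (Fin m))) (v : V) :
    (G.neighborSet v).ncard < m := by
  by_contra! hm
  obtain ⟨T, hTv, hT⟩ := exists_subset_card_eq hm
  let e : Fin m ≃ T := (Finite.equivFinOfCardEq (by rw [Nat.card_coe_set_eq, hT])).symm
  have hadj (i : Fin m) : G.Adj v (e i) := hTv (e i).2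
  refine h ⟨Sum.elim (fun _ => v) (fun i => e i), ?_, ?_⟩
  · exact (injective_of_subsingleton _).sumElim (Subtype.val_injective.comp e.injective)
      fun _ i => (hadj i).ne
  · rintro (_ | i) (_ | i') hab <;> simp [completeBipartiteGraph] at hab
    exacts [hadj i', (hadj i).symm]

lemma ncard_inter_neighborSet_add_ncard_inter_neighborSet_compl [Finite V] (G : SimpleGraph V)
    {v : V} {S : Set V} (hv : v ∉ S) :
    (G.neighborSet v ∩ S).ncard + (Gᶜ.neighborSet v ∩ S).ncard = S.ncard := by
  have : Gᶜ.neighborSet v ∩ S = S \ G.neighborSet v := by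
    ext u
    simp only [mem_inter_iff, mem_neighborSet, compl_adj, mem_sdiff]
    exact ⟨fun ⟨⟨_, hvu⟩, hu⟩ => ⟨hu, hvu⟩, fun ⟨hu, hvu⟩ => ⟨⟨fun h => hv (h ▸ hu), hvu⟩, hu⟩⟩
  rw [this, inter_comm, ncard_inter_add_ncard_sdiff_eq_ncard]

lemma exists_mem_notMem_adj_of_ncard_lt [Finite V] {G : SimpleGraph V} {q : V} {X S U : Set V}
    {d : ℕ} (hXS : X ⊆ S) (hq : d ≤ (G.neighborSet q ∩ S).ncard)
    (h : U.ncard + S.ncard < X.ncard + d) : ∃ p ∈ X, p ∉ U ∧ G.Adj q p := by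
  have hunion := ncard_inter_add_ncard_union X (G.neighborSet q ∩ S)
  have hS : (X ∪ (G.neighborSet q ∩ S)).ncard ≤ S.ncard :=
    ncard_le_ncard (union_subset hXS inter_subset_right)
  obtain ⟨p, ⟨hpX, hqp, -⟩, hpU⟩ :=
    exists_mem_notMem_of_ncard_lt_ncard (s := U) (t := X ∩ (G.neighborSet q ∩ S)) (by omega)
  exact ⟨p, hpX, hpU, hqp⟩

lemma exists_adj_pair_of_ncard_lt [Finite V] {G : SimpleGraph V} {w : V}
    {S₁ S₂ U₁ U₂ : Set V} {d : ℕ}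
    (hd₁ : ∀ p ∈ S₁, d ≤ (G.neighborSet p ∩ S₂).ncard)
    (hd₂ : ∀ q ∈ S₂, d ≤ (G.neighborSet q ∩ S₁).ncard)
    (hU₁ : U₁.ncard < (G.neighborSet w ∩ S₁).ncard)
    (hU₂ : U₂.ncard < (G.neighborSet w ∩ S₂).ncard)
    (h : U₁.ncard + U₂.ncard + S₁.ncard + S₂.ncard <
      (G.neighborSet w ∩ S₁).ncard + (G.neighborSet w ∩ S₂).ncard + 2 * d) :
    ∃ p ∉ U₁, ∃ q ∉ U₂, p ∈ S₁ ∧ q ∈ S₂ ∧ G.Adj w p ∧ G.Adj w q ∧ G.Adj p q := by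
  by_cases h₁ : U₁.ncard + S₁.ncard < (G.neighborSet w ∩ S₁).ncard + d
  · obtain ⟨q, ⟨hwq, hq⟩, hqU⟩ := exists_mem_notMem_of_ncard_lt_ncard hU₂
    obtain ⟨p, ⟨hwp, hp⟩, hpU, hqp⟩ :=
      exists_mem_notMem_adj_of_ncard_lt inter_subset_right (hd₂ q hq) h₁
    exact ⟨p, hpU, q, hqU, hp, hq, hwp, hwq, hqp.symm⟩
  · have h₂ : U₂.ncard + S₂.ncard < (G.neighborSet w ∩ S₂).ncard + d := by omega
    obtain ⟨p, ⟨hwp, hp⟩, hpU⟩ := exists_mem_notMem_of_ncard_lt_ncard hU₁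
    obtain ⟨q, ⟨hwq, hq⟩, hqU, hpq⟩ :=
      exists_mem_notMem_adj_of_ncard_lt inter_subset_right (hd₁ p hp) h₂
    exact ⟨p, hpU, q, hqU, hp, hq, hwp, hwq, hpq⟩

section Fan

variable {k : ℕ}

def fanMap (c : V) (p q : Fin k → V) : Option (Fin k × Fin 2) → V
  | none => c
  | some (i, z) => ![p i, q i] z

lemma range_fanMap_subset (c : V) (p q : Fin k → V) :
    range (fanMap c p q) ⊆ insert c (range p ∪ range q) := by
  rintro _ ⟨_ | ⟨i, z⟩, rfl⟩
  · exact mem_insert _ _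
  · fin_cases z
    exacts [.inr (.inl ⟨i, rfl⟩), .inr (.inr ⟨i, rfl⟩)]

lemma fanMap_injective {c : V} {p q : Fin k → V} (hp : Injective p) (hq : Injective q)
    (hpq : ∀ i j, p i ≠ q j) (hcp : ∀ i, c ≠ p i) (hcq : ∀ i, c ≠ q i) :
    Injective (fanMap c p q) := by
  rintro (_ | ⟨i, z⟩) (_ | ⟨i', z'⟩) h <;> (try fin_cases z) <;> (try fin_cases z') <;>
    simp_all [fanMap, hp.eq_iff, hq.eq_iff, eq_comm]

lemma fanMap_adj {G : SimpleGraph V} {c : V} {p q : Fin k → V}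
    (h : ∀ i, G.Adj c (p i) ∧ G.Adj c (q i) ∧ G.Adj (p i) (q i)) :
    ∀ ⦃x y⦄, (fan k).Adj x y → G.Adj (fanMap c p q x) (fanMap c p q y) := by
  have key : ∀ x y, x ≠ y → (x = none ∨ ∃ i a b, x = some (i, a) ∧ y = some (i, b)) →
      G.Adj (fanMap c p q x) (fanMap c p q y) := by
    rintro x y hne (rfl | ⟨i, a, b, rfl, rfl⟩)
    · rcases y with _ | ⟨i, z⟩
      · exact absurd rfl hne
      · fin_cases z
        exacts [(h i).1, (h i).2.1]
    · fin_cases a <;> fin_cases b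
      exacts [absurd rfl hne, (h i).2.2, (h i).2.2.symm, absurd rfl hne]
  rintro x y ⟨hne, hxy | hyx⟩
  exacts [key x y hne hxy, (key y x hne.symm hyx).symm]

lemma exists_fan_copy {G : SimpleGraph V} {S₁ S₂ : Set V} (hS : Disjoint S₁ S₂) {c : V}
    (hc : c ∉ S₁ ∪ S₂) {p q : Fin k → V} (hp : Injective p) (hq : Injective q)
    (h : ∀ i, p i ∈ S₁ ∧ q i ∈ S₂ ∧ G.Adj c (p i) ∧ G.Adj c (q i) ∧ G.Adj (p i) (q i)) :
    ∃ g : Copy (fan k) G, range g ⊆ insert c (range p ∪ range q) :=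
  ⟨⟨⟨fanMap c p q, fun hxy => fanMap_adj (fun i => (h i).2.2) hxy⟩,
    fanMap_injective hp hq (fun i j => hS.ne_of_mem (h i).1 (h j).2.1)
      (fun i => (ne_of_mem_of_not_mem (mem_union_left _ (h i).1) hc).symm)
      (fun i => (ne_of_mem_of_not_mem (mem_union_right _ (h i).2.1) hc).symm)⟩,
    range_fanMap_subset c p q⟩

end Fan

section Greedy

variable [Finite V] {G : SimpleGraph V} {S₁ S₂ : Set V} {k d : ℕ}

lemma exists_fan_pairs (hS : Disjoint S₁ S₂)
    (hd₁ : ∀ p ∈ S₁, d ≤ (G.neighborSet p ∩ S₂).ncard)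
    (hd₂ : ∀ q ∈ S₂, d ≤ (G.neighborSet q ∩ S₁).ncard)
    {w : V} (hw : w ∉ S₁ ∪ S₂) (hw₁ : 2 * k ≤ (G.neighborSet w ∩ S₁).ncard)
    (hw₂ : 2 * k ≤ (G.neighborSet w ∩ S₂).ncard)
    (hwc : (Gᶜ.neighborSet w).ncard + 4 * k ≤ 2 * d + 1)
    {U₁ U₂ : Set V} (hU₁ : U₁.ncard ≤ k) (hU₂ : U₂.ncard ≤ k) :
    ∃ p q : Fin k → V, Injective p ∧ Injective q ∧ Disjoint (range p) U₁ ∧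
      Disjoint (range q) U₂ ∧
      ∀ i, p i ∈ S₁ ∧ q i ∈ S₂ ∧ G.Adj w (p i) ∧ G.Adj w (q i) ∧ G.Adj (p i) (q i) := by
  have hsplit : (Gᶜ.neighborSet w ∩ (S₁ ∪ S₂)).ncard + (G.neighborSet w ∩ (S₁ ∪ S₂)).ncard =
      S₁.ncard + S₂.ncard := by
    rw [← ncard_union_eq hS]
    simpa using ncard_inter_neighborSet_add_ncard_inter_neighborSet_compl Gᶜ hw
  have hX := ncard_inter_add_ncard_inter_of_disjoint (G.neighborSet w) hS
  have hcompl : (Gᶜ.neighborSet w ∩ (S₁ ∪ S₂)).ncard ≤ (Gᶜ.neighborSet w).ncard :=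
    ncard_le_ncard inter_subset_left
  exact exists_injective_pairs (r := 2 * k) (fun U₁ U₂ h₁ h₂ =>
    exists_adj_pair_of_ncard_lt hd₁ hd₂ (by omega) (by omega) (by omega)) k (by omega) (by omega)

lemma exists_disjoint_fan_copies (hS : Disjoint S₁ S₂)
    (hd₁ : ∀ p ∈ S₁, d ≤ (G.neighborSet p ∩ S₂).ncard)
    (hd₂ : ∀ q ∈ S₂, d ≤ (G.neighborSet q ∩ S₁).ncard)
    (hwc : ∀ w, (Gᶜ.neighborSet w).ncard + 4 * k ≤ 2 * d + 1)
    {a b : V} (hab : a ≠ b) (ha : a ∉ S₁ ∪ S₂) (hb : b ∉ S₁ ∪ S₂)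
    (ha₁ : 2 * k ≤ (G.neighborSet a ∩ S₁).ncard) (ha₂ : 2 * k ≤ (G.neighborSet a ∩ S₂).ncard)
    (hb₁ : 2 * k ≤ (G.neighborSet b ∩ S₁).ncard) (hb₂ : 2 * k ≤ (G.neighborSet b ∩ S₂).ncard) :
    ∃ g₁ g₂ : Copy (fan k) G, range g₁ ⊆ insert a (S₁ ∪ S₂) ∧ range g₂ ⊆ insert b (S₁ ∪ S₂) ∧
      Disjoint (range g₁) (range g₂) := by
  obtain ⟨pb, qb, hpb, hqb, -, -, hb'⟩ :=
    exists_fan_pairs hS hd₁ hd₂ hb hb₁ hb₂ (hwc b) (U₁ := ∅) (U₂ := ∅) (by simp) (by simp)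
  obtain ⟨pa, qa, hpa, hqa, hpab, hqab, ha'⟩ :=
    exists_fan_pairs hS hd₁ hd₂ ha ha₁ ha₂ (hwc a) (U₁ := range pb) (U₂ := range qb)
      (by simp [ncard_range_of_injective hpb]) (by simp [ncard_range_of_injective hqb])
  obtain ⟨g₁, hg₁⟩ := exists_fan_copy hS ha hpa hqa ha'
  obtain ⟨g₂, hg₂⟩ := exists_fan_copy hS hb hpb hqb hb'
  have hPa : range pa ⊆ S₁ := range_subset_iff.2 fun i => (ha' i).1
  have hQa : range qa ⊆ S₂ := range_subset_iff.2 fun i => (ha' i).2.1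
  have hPb : range pb ⊆ S₁ := range_subset_iff.2 fun i => (hb' i).1
  have hQb : range qb ⊆ S₂ := range_subset_iff.2 fun i => (hb' i).2.1
  have hleaves : Disjoint (range pa ∪ range qa) (range pb ∪ range qb) :=
    disjoint_union_left.2 ⟨disjoint_union_right.2 ⟨hpab, hS.mono hPa hQb⟩,
      disjoint_union_right.2 ⟨(hS.mono hPb hQa).symm, hqab⟩⟩
  refine ⟨g₁, g₂, hg₁.trans (insert_subset_insert (union_subset_union hPa hQa)),
    hg₂.trans (insert_subset_insert (union_subset_union hPb hQb)), Disjoint.mono hg₁ hg₂ ?_⟩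
  rw [disjoint_insert_left, disjoint_insert_right, mem_insert_iff, not_or]
  exact ⟨⟨hab, fun h => ha (union_subset_union hPb hQb h)⟩,
    fun h => hb (union_subset_union hPa hQa h), hleaves⟩

end Greedy

section Copies

variable {G : SimpleGraph V} {H : SimpleGraph α}

lemma containsCopy_copies_of_pairwise_disjoint {ι : Type*} [Fintype ι] {t : ℕ}
    (hι : Fintype.card ι = t) (g : ι → Copy H G)
    (hg : Pairwise (Disjoint on fun i => range (g i))) :
    G.ContainsCopy (copies t H) := by
  let e := (Fintype.equivFinOfCardEq hι).symm
  refine ⟨fun x => g (e x.1) x.2, ?_, ?_⟩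
  · rintro ⟨i, x⟩ ⟨j, y⟩ h
    obtain rfl : i = j := e.injective <| by_contra fun hij => disjoint_range_iff.1 (hg hij) x y h
    exact congrArg _ ((g (e i)).injective h)
  · rintro ⟨i, x⟩ ⟨j, y⟩ ⟨rfl, hxy⟩
    exact (g (e i)).toHom.map_adj hxy

lemma containsCopy_copies_succ_of_replace {s : ℕ} {f : Fin s × α → V} (hf : Injective f)
    (hf_adj : ∀ ⦃a b⦄, (copies s H).Adj a b → G.Adj (f a) (f b)) (j : Fin s)
    (g₁ g₂ : Copy H G) (h₁₂ : Disjoint (range g₁) (range g₂))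
    (h₁ : ∀ i ≠ j, Disjoint (range g₁) (range fun x => f (i, x)))
    (h₂ : ∀ i ≠ j, Disjoint (range g₂) (range fun x => f (i, x))) :
    G.ContainsCopy (copies (s + 1) H) := by
  classical
  let slice (i : Fin s) : Copy H G :=
    ⟨⟨fun x => f (i, x), fun hxy => hf_adj ⟨rfl, hxy⟩⟩, hf.comp (Prod.mk_right_injective i)⟩
  have hslices : Pairwise (Disjoint on fun i => range (slice i)) := fun i i' hii' =>
    disjoint_range_iff.2 fun x y hxy => hii' (congrArg Prod.fst (hf hxy))
  refine containsCopy_copies_of_pairwise_disjoint (ι := Option (Fin s)) (by simp)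
    (fun o => o.elim g₂ (update slice j g₁)) ?_
  convert pairwise_disjoint_option_elim (hslices.disjoint_update h₁) (T := range g₂) ?_ using 2
  · funext o
    rcases o with _ | i
    exacts [rfl, apply_update (fun _ (g : Copy H G) => range g) slice j g₁ i]
  · intro i
    by_cases hi : i = j
    · subst hi
      simpa using h₁₂.symm
    · rw [update_of_ne hi]
      exact h₂ i hi

end Copies

end SimpleGraph

theorem at_most_one_special_vertex_general (k t n N : ℕ)
    (hn1 : 12 * t * k + 2 * k ≤ n)
    (R : SimpleGraph (Fin N))
    (hred : ¬ R.ContainsCopy (completeBipartiteGraph (Fin 1) (Fin (n - 1))))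
    (hblue : ¬ (Rᶜ).ContainsCopy (copies t (fan k)))
    (f : Fin (t - 1) × Option (Fin k × Fin 2) → Fin N)
    (hf_inj : Function.Injective f)
    (hf_adj : ∀ ⦃a b⦄, (copies (t - 1) (fan k)).Adj a b → (Rᶜ).Adj (f a) (f b))
    (A S : Set (Fin N)) (hA : A = Set.range f) (hS : S = Aᶜ)
    (S₁ S₂ : Set (Fin N)) (hS₁S : S₁ ⊆ S) (hS₂S : S₂ ⊆ S) (hSdisj : Disjoint S₁ S₂)
    (hS₁deg : ∀ v ∈ S₁,
      (n : ℤ) - 4 * (k : ℤ) * (t : ℤ) + 5 ≤ (((Rᶜ).neighborSet v ∩ S₂).ncard : ℤ))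
    (hS₂deg : ∀ v ∈ S₂,
      (n : ℤ) - 4 * (k : ℤ) * (t : ℤ) + 5 ≤ (((Rᶜ).neighborSet v ∩ S₁).ncard : ℤ)) :
    ∀ j : Fin (t - 1),
      Set.Subsingleton {a : Fin N | ∃ x : Option (Fin k × Fin 2), a = f (j, x) ∧
        2 * k ≤ (((Rᶜ).neighborSet a ∩ S₁).ncard) ∧
        2 * k ≤ (((Rᶜ).neighborSet a ∩ S₂).ncard)} := by
  rintro j _ ⟨xa, rfl, ha₁, ha₂⟩ _ ⟨xb, rfl, hb₁, hb₂⟩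
  by_contra hab
  have ht : 1 ≤ t - 1 := j.pos
  have hkt : k ≤ k * t := Nat.le_mul_of_pos_right k (by omega)
  have hn : 12 * (k * t) + 2 * k ≤ n := by linarith
  have hd {m : ℕ} (h : (n : ℤ) - 4 * k * t + 5 ≤ m) : n + 5 - 4 * (k * t) ≤ m := by
    push_cast [mul_assoc] at h
    omega
  have hwc : ∀ w, (Rᶜᶜ.neighborSet w).ncard + 4 * k ≤ 2 * (n + 5 - 4 * (k * t)) + 1 := fun w => by
    have := ncard_neighborSet_lt_of_not_containsCopy_star hred w
    rw [compl_compl]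
    omega
  have hout : S₁ ∪ S₂ ⊆ (range f)ᶜ := hA ▸ hS ▸ union_subset hS₁S hS₂S
  obtain ⟨g₁, g₂, hg₁, hg₂, h₁₂⟩ := exists_disjoint_fan_copies hSdisj (fun p hp => hd (hS₁deg p hp))
    (fun q hq => hd (hS₂deg q hq)) hwc hab
    (fun h => hout h (mem_range_self _)) (fun h => hout h (mem_range_self _)) ha₁ ha₂ hb₁ hb₂
  have hslice (y) (i : Fin (t - 1)) (hij : i ≠ j) :
      Disjoint (insert (f (j, y)) (S₁ ∪ S₂)) (range fun x => f (i, x)) := by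
    refine disjoint_insert_left.2 ⟨fun ⟨x, hx⟩ => hij (congrArg Prod.fst (hf_inj hx)), ?_⟩
    exact disjoint_right.2 fun _ ⟨x, hx⟩ h => hout h (hx ▸ mem_range_self _)
  have := containsCopy_copies_succ_of_replace hf_inj hf_adj j g₁ g₂ h₁₂
    (fun i hi => (hslice xa i hi).mono_left hg₁) (fun i hi => (hslice xb i hi).mono_left hg₂)
  exact hblue (by rwa [Nat.sub_add_cancel (by omega : 1 ≤ t)] at this)

/-- Claim 5 in the proof of Theorem 6: for each of the `t − 1` vertex-disjoint blue copies
of `F_k` spanning `A`, at most one vertex of that copy has at least `2k` blue neighbors in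
both `S₁` and `S₂`. -/
theorem at_most_one_special_vertex (k t n N : ℕ) (hk : 1 ≤ k) (ht : 2 ≤ t)
    (hn1 : 12 * t * k + 2 * k ≤ n) (hn2 : 4 * t * k ^ 2 ≤ n)
    (hN : N = 2 * n + t - 2)
    (R : SimpleGraph (Fin N))
    (hred : ¬ R.ContainsCopy (completeBipartiteGraph (Fin 1) (Fin (n - 1))))
    (hblue : ¬ (Rᶜ).ContainsCopy (copies t (fan k)))
    (f : Fin (t - 1) × Option (Fin k × Fin 2) → Fin N)
    (hf_inj : Function.Injective f)
    (hf_adj : ∀ ⦃a b⦄, (copies (t - 1) (fan k)).Adj a b → (Rᶜ).Adj (f a) (f b))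
    (A S : Set (Fin N)) (hA : A = Set.range f) (hS : S = Aᶜ)
    (S₁ S₂ : Set (Fin N)) (hS₁S : S₁ ⊆ S) (hS₂S : S₂ ⊆ S) (hSdisj : Disjoint S₁ S₂)
    (hS₁deg : ∀ v ∈ S₁,
      (n : ℤ) - 4 * (k : ℤ) * (t : ℤ) + 5 ≤ (((Rᶜ).neighborSet v ∩ S₂).ncard : ℤ))
    (hS₂deg : ∀ v ∈ S₂,
      (n : ℤ) - 4 * (k : ℤ) * (t : ℤ) + 5 ≤ (((Rᶜ).neighborSet v ∩ S₁).ncard : ℤ)) :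
    ∀ j : Fin (t - 1),
      Set.Subsingleton {a : Fin N | ∃ x : Option (Fin k × Fin 2), a = f (j, x) ∧
        2 * k ≤ (((Rᶜ).neighborSet a ∩ S₁).ncard) ∧
        2 * k ≤ (((Rᶜ).neighborSet a ∩ S₂).ncard)} :=
  at_most_one_special_vertex_general k t n N hn1 R hred hblue f hf_inj hf_adj A S hA hS S₁ S₂ hS₁S
    hS₂S hSdisj hS₁deg hS₂deg
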